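/- For x > 0 and r ≥ 0 define h_x(r) = ∫_0^x 2·sinh(πt)·cosh(πr) / (cosh(π(r+t))·cosh(π(r−t))) dt. Then for every real x ≥ 1: h_x(r) > 1/4 for all r with 1 ≤ r ≤ x, and h_x(r) > 3/100 for all r with 0 ≤ r ≤ 1. -/

import Mathlib

/-!
Since `cosh (π(r+t)) cosh (π(r-t)) = sinh² (πr) + cosh² (πt)`, the integrand is
`cosh (πr)` times `2 sinh (πt) / (a² + cosh² (πt))` with `a = sinh (πr)`, whose antiderivative
is `(2 / (π a)) arctan (cosh (πt) / a)`. For `1 ≤ r ≤ x` this closed form is at least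
`(2/π) (π/4 - 1/sinh (πr)) ≥ 1/2 - 2/π²`. For `0 ≤ r ≤ 1` the integral only decreases when `x`
is lowered to `1`, the factor `cosh (πr)` is dropped and `a` is raised to `sinh π`, and the closed
form at `a = sinh π ∈ (19/2, 13)` exceeds `3/100`.
-/

open Real

/-- `h_x(r) = ∫_0^x 2 sinh(πt) cosh(πr) / (cosh(π(r+t)) cosh(π(r−t))) dt`. -/
noncomputable def hFun (x r : ℝ) : ℝ :=
  ∫ t in (0:ℝ)..x,
    2 * Real.sinh (Real.pi * t) * Real.cosh (Real.pi * r) /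
      (Real.cosh (Real.pi * (r + t)) * Real.cosh (Real.pi * (r - t)))

theorem cosh_add_mul_cosh_sub (a b : ℝ) :
    cosh (a + b) * cosh (a - b) = sinh a ^ 2 + cosh b ^ 2 := by
  rw [cosh_add, cosh_sub]
  linear_combination cosh b ^ 2 * cosh_sq a + sinh a ^ 2 * cosh_sq b

noncomputable def sinhKernelIntegral (a x : ℝ) : ℝ :=
  ∫ t in (0:ℝ)..x, 2 * sinh (π * t) / (a ^ 2 + cosh (π * t) ^ 2)

theorem continuous_sinh_div_sq_add_cosh_sq (a : ℝ) :
    Continuous fun t : ℝ => 2 * sinh (π * t) / (a ^ 2 + cosh (π * t) ^ 2) :=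
  .div (by fun_prop) (by fun_prop) fun t => by positivity

theorem hFun_eq_cosh_mul_sinhKernelIntegral (x r : ℝ) :
    hFun x r = cosh (π * r) * sinhKernelIntegral (sinh (π * r)) x := by
  rw [hFun, sinhKernelIntegral, ← intervalIntegral.integral_const_mul]
  congr 1 with t
  rw [mul_add, mul_sub, cosh_add_mul_cosh_sub]
  ring

theorem hasDerivAt_arctan_cosh_div {a : ℝ} (ha : a ≠ 0) (t : ℝ) :
    HasDerivAt (fun t => 2 / (π * a) * arctan (cosh (π * t) / a))
      (2 * sinh (π * t) / (a ^ 2 + cosh (π * t) ^ 2)) t := by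
  have hcosh : HasDerivAt (fun t => cosh (π * t)) (sinh (π * t) * π) t := by
    have hlin : HasDerivAt (fun t : ℝ => π * t) π t := by simpa using (hasDerivAt_id t).const_mul π
    exact (hasDerivAt_cosh _).comp t hlin
  refine (((hcosh.div_const a).arctan).const_mul (2 / (π * a))).congr_deriv ?_
  have : 0 < a ^ 2 + cosh (π * t) ^ 2 := by positivity
  field_simp

theorem sinhKernelIntegral_eq {a : ℝ} (ha : a ≠ 0) (x : ℝ) :
    sinhKernelIntegral a x = 2 / (π * a) * (arctan (cosh (π * x) / a) - arctan (1 / a)) := by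
  rw [sinhKernelIntegral, intervalIntegral.integral_eq_sub_of_hasDerivAt
    (fun t _ => hasDerivAt_arctan_cosh_div ha t)
    ((continuous_sinh_div_sq_add_cosh_sq a).intervalIntegrable _ _)]
  simp only [mul_zero, cosh_zero]
  ring

theorem sinhKernelIntegral_mono (a : ℝ) {x y : ℝ} (hx : 0 ≤ x) (hxy : x ≤ y) :
    sinhKernelIntegral a x ≤ sinhKernelIntegral a y := by
  have hint :=
    (continuous_sinh_div_sq_add_cosh_sq a).intervalIntegrable (μ := MeasureTheory.volume)
  rw [← sub_nonneg, sinhKernelIntegral, sinhKernelIntegral,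
    intervalIntegral.integral_interval_sub_left (hint _ _) (hint _ _)]
  refine intervalIntegral.integral_nonneg hxy fun t ht => ?_
  have : 0 ≤ sinh (π * t) := sinh_nonneg_iff.2 (mul_nonneg pi_pos.le (hx.trans ht.1))
  positivity

theorem sinhKernelIntegral_nonneg (a : ℝ) {x : ℝ} (hx : 0 ≤ x) : 0 ≤ sinhKernelIntegral a x := by
  simpa [sinhKernelIntegral] using sinhKernelIntegral_mono a le_rfl hx

theorem sinhKernelIntegral_anti {a b x : ℝ} (hx : 0 ≤ x) (hab : a ^ 2 ≤ b ^ 2) :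
    sinhKernelIntegral b x ≤ sinhKernelIntegral a x := by
  refine intervalIntegral.integral_mono_on hx
    ((continuous_sinh_div_sq_add_cosh_sq b).intervalIntegrable _ _)
    ((continuous_sinh_div_sq_add_cosh_sq a).intervalIntegrable _ _) fun t ht => ?_
  have : 0 ≤ sinh (π * t) := sinh_nonneg_iff.2 (mul_nonneg pi_pos.le ht.1)
  gcongr

theorem arctan_lt_self {x : ℝ} (hx : 0 < x) : arctan x < x := by
  simpa using lt_tan (arctan_pos.2 hx) (arctan_lt_pi_div_two x)

theorem pi_div_four_sub_inv_lt_arctan_sub {a c : ℝ} (ha : 0 < a) (hac : a < c) :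
    π / 4 - 1 / a < arctan (c / a) - arctan (1 / a) := by
  have hone : π / 4 < arctan (c / a) := by
    rw [← arctan_one]
    exact arctan_strictMono ((one_lt_div ha).2 hac)
  linarith [arctan_lt_self (one_div_pos.2 ha)]

theorem exp_pi_bounds : 20 < exp π ∧ exp π < 26 := by
  have hexp3 : exp 3 = exp 1 ^ 3 := by rw [← exp_nat_mul]; norm_num
  constructor
  · calc (20 : ℝ) < 2.7182818283 ^ 3 := by norm_num
      _ < exp 1 ^ 3 := by gcongr; exact exp_one_gt_d9
      _ = exp 3 := hexp3.symm
      _ < exp π := exp_lt_exp.2 pi_gt_three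
  · have hsmall : exp 0.15 < 1 / (1 - 0.15) :=
      exp_bound_div_one_sub_of_interval' (by norm_num) (by norm_num)
    calc exp π < exp (3 + 0.15) := exp_lt_exp.2 (by linarith [pi_lt_d2])
      _ = exp 1 ^ 3 * exp 0.15 := by rw [exp_add, hexp3]
      _ < 2.7182818286 ^ 3 * (1 / (1 - 0.15)) := by gcongr; exact exp_one_lt_d9
      _ < 26 := by norm_num

theorem sinh_pi_bounds : 19 / 2 < sinh π ∧ sinh π < 13 := by
  obtain ⟨hlo, hhi⟩ := exp_pi_bounds
  have hneg : exp (-π) < 1 := exp_lt_one_iff.2 (neg_lt_zero.2 pi_pos)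
  rw [sinh_eq]
  constructor <;> linarith [exp_pos (-π)]

theorem one_quarter_lt_hFun {x r : ℝ} (hr : 1 ≤ r) (hrx : r ≤ x) : 1 / 4 < hFun x r := by
  have hπ := pi_pos
  set s := sinh (π * r)
  have hs : π ≤ s := (self_le_sinh_iff.2 (by positivity)).trans' (by nlinarith)
  have hs0 : 0 < s := by linarith
  have hcosh : s < cosh (π * x) :=
    (sinh_lt_cosh _).trans_le (cosh_le_cosh.2 (by rw [abs_of_pos, abs_of_pos] <;> nlinarith))
  have hratio : 1 ≤ cosh (π * r) / s := (one_le_div hs0).2 (sinh_lt_cosh _).le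
  rw [hFun_eq_cosh_mul_sinhKernelIntegral, sinhKernelIntegral_eq hs0.ne']
  set D := arctan (cosh (π * x) / s) - arctan (1 / s)
  have hD : π / 4 - 1 / π < D := by
    linarith [pi_div_four_sub_inv_lt_arctan_sub hs0 hcosh, one_div_le_one_div_of_le hπ hs]
  have hquarter : 1 / 4 < 2 / π * (π / 4 - 1 / π) := by
    field_simp
    nlinarith [pi_gt_three]
  have hmain : 1 / 4 < 2 / π * D := hquarter.trans (by gcongr)
  calc 1 / 4 < 2 / π * D := hmain
    _ ≤ cosh (π * r) / s * (2 / π * D) := le_mul_of_one_le_left (by linarith) hratio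
    _ = cosh (π * r) * (2 / (π * s) * D) := by ring

theorem three_hundredths_lt_hFun {x r : ℝ} (hx : 1 ≤ x) (hr0 : 0 ≤ r) (hr1 : r ≤ 1) :
    3 / 100 < hFun x r := by
  have hπ := pi_pos
  obtain ⟨hs_lo, hs_hi⟩ := sinh_pi_bounds
  have hs0 : 0 < sinh π := by linarith
  have hsr : sinh (π * r) ^ 2 ≤ sinh π ^ 2 := by
    have : 0 ≤ sinh (π * r) := sinh_nonneg_iff.2 (by positivity)
    gcongr
    exact sinh_le_sinh.2 (by nlinarith)
  have harctan := pi_div_four_sub_inv_lt_arctan_sub hs0 (sinh_lt_cosh π)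
  have hclosed : 3 / 100 < sinhKernelIntegral (sinh π) 1 := by
    rw [sinhKernelIntegral_eq hs0.ne', mul_one]
    calc (3 : ℝ) / 100 < 2 / (π * sinh π) * (π / 4 - 1 / sinh π) := by
          rw [← sub_pos]
          field_simp
          nlinarith [pi_gt_three, pi_lt_d2, mul_pos (sub_pos.2 hs_lo) (sub_pos.2 hs_hi)]
      _ ≤ _ := by gcongr
  calc 3 / 100 < sinhKernelIntegral (sinh π) 1 := hclosed
    _ ≤ sinhKernelIntegral (sinh (π * r)) 1 := sinhKernelIntegral_anti zero_le_one hsr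
    _ ≤ sinhKernelIntegral (sinh (π * r)) x := sinhKernelIntegral_mono _ zero_le_one hx
    _ ≤ hFun x r := by
        rw [hFun_eq_cosh_mul_sinhKernelIntegral]
        exact le_mul_of_one_le_left (sinhKernelIntegral_nonneg _ (by linarith)) (one_le_cosh _)

theorem statement10 :
    ∀ x : ℝ, 1 ≤ x →
      (∀ r : ℝ, 1 ≤ r → r ≤ x → 1/4 < hFun x r) ∧
      (∀ r : ℝ, 0 ≤ r → r ≤ 1 → 3/100 < hFun x r) :=
  fun _ hx => ⟨fun _ hr hrx => one_quarter_lt_hFun hr hrx,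
    fun _ hr0 hr1 => three_hundredths_lt_hFun hx hr0 hr1⟩
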